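/- arXiv:2206.11373 — 7 statements merged into one kernel-verified Lean document; each statement's English description precedes it below -/
import Mathlib

section
/- Let X be a real Hilbert space, let A be a nonempty closed affine subspace of X with parallel (direction) subspace U := A − A, and let B := {x ∈ X : ⟨x, v⟩ = β} be a hyperplane, where v ∈ X, ‖v‖ = 1, and β ∈ ℝ. Suppose that P_U(v) ≠ 0. Then for every x ∈ X, the metric projection of x onto A ∩ B is given by P_{A∩B}(x) = P_A(x) + ((β − ⟨P_A(x), v⟩)/‖P_U(v)‖²) · P_U(v). -/
open RealInnerProductSpace Pointwise

/-- The metric (nearest-point) projection onto a set `C` in a real inner product space: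
`metricProj C x` is a point of `C` minimizing the distance to `x` (when such a point exists;
for a nonempty closed convex set in a Hilbert space it exists and is unique). -/
noncomputable def metricProj {X : Type*} [NormedAddCommGroup X] [InnerProductSpace ℝ X]
    (C : Set X) (x : X) : X :=
  letI := Classical.dec (∃ p ∈ C, ∀ q ∈ C, ‖x - p‖ ≤ ‖x - q‖)
  if h : ∃ p ∈ C, ∀ q ∈ C, ‖x - p‖ ≤ ‖x - q‖ then h.choose else 0

section Aux

variable {X : Type*} [NormedAddCommGroup X] [InnerProductSpace ℝ X] [CompleteSpace X]

lemma metricProj_spec {C : Set X} (hne : C.Nonempty) (hc : IsClosed C) (hconv : Convex ℝ C)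
    (x : X) : metricProj C x ∈ C ∧ ∀ w ∈ C, ⟪x - metricProj C x, w - metricProj C x⟫ ≤ 0 := by
  obtain ⟨p, hpC, hp⟩ := exists_norm_eq_iInf_of_complete_convex hne hc.isComplete hconv x
  have hbdd : BddBelow (Set.range fun w : C => ‖x - w‖) :=
    ⟨0, by rintro _ ⟨w, rfl⟩; positivity⟩
  have hex : ∃ p ∈ C, ∀ q ∈ C, ‖x - p‖ ≤ ‖x - q‖ := by
    refine ⟨p, hpC, fun q hq => ?_⟩
    rw [hp]; exact ciInf_le hbdd ⟨q, hq⟩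
  have hdef : metricProj C x = hex.choose := by
    rw [metricProj]; simp [hex]
  obtain ⟨hmem, hmin⟩ := hex.choose_spec
  rw [hdef]
  refine ⟨hmem, ?_⟩
  haveI := hne.to_subtype
  rw [← norm_eq_iInf_iff_real_inner_le_zero hconv hmem]
  exact le_antisymm (le_ciInf fun w => hmin w w.2) (ciInf_le hbdd ⟨_, hmem⟩)

lemma metricProj_eq_of {C : Set X} (hne : C.Nonempty) (hc : IsClosed C) (hconv : Convex ℝ C)
    {x q : X} (hq : q ∈ C) (hvar : ∀ w ∈ C, ⟪x - q, w - q⟫ ≤ 0) : metricProj C x = q := by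
  obtain ⟨hpm, hp⟩ := metricProj_spec hne hc hconv x
  set p := metricProj C x
  have h1 : ⟪x - q, p - q⟫ ≤ 0 := hvar p hpm
  have h2 : ⟪x - p, q - p⟫ ≤ 0 := hp q hq
  have e3 : ⟪p - q, p - q⟫ = ⟪x - q, p - q⟫ - ⟪x - p, p - q⟫ := by
    rw [← inner_sub_left]; congr 1; abel
  have e4 : ⟪x - p, p - q⟫ = -⟪x - p, q - p⟫ := by
    rw [← inner_neg_right]; congr 1; abel
  have hz : ⟪p - q, p - q⟫ = 0 :=
    le_antisymm (by rw [e3, e4]; linarith) real_inner_self_nonneg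
  have : p - q = 0 := inner_self_eq_zero.mp hz
  have : p = q := by rwa [sub_eq_zero] at this
  exact this

/-- The metric projection onto a closed affine subspace: membership and orthogonality of the
residual to the direction. -/
lemma metricProj_affine_spec (A : AffineSubspace ℝ X) (hA : (A : Set X).Nonempty)
    (hAc : IsClosed (A : Set X)) (x : X) :
    metricProj (A : Set X) x ∈ A ∧
      ∀ w ∈ A.direction, ⟪x - metricProj (A : Set X) x, w⟫ = 0 := by
  obtain ⟨hmem, hvar⟩ := metricProj_spec hA hAc (A.convex) x
  set p := metricProj (A : Set X) x
  refine ⟨hmem, fun w hw => ?_⟩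
  have h1 : w +ᵥ p ∈ A := AffineSubspace.vadd_mem_of_mem_direction hw hmem
  have h2 : (-w) +ᵥ p ∈ A := AffineSubspace.vadd_mem_of_mem_direction (neg_mem hw) hmem
  have e1 : ⟪x - p, w⟫ ≤ 0 := by
    have := hvar _ h1
    simpa [vadd_eq_add, add_sub_cancel_right] using this
  have e2 : ⟪x - p, -w⟫ ≤ 0 := by
    have := hvar _ h2
    simpa [vadd_eq_add, add_sub_cancel_right] using this
  rw [inner_neg_right] at e2
  linarith

end Aux

theorem proj_inter_formula_of_projDir_ne_zero
    {X : Type*} [NormedAddCommGroup X] [InnerProductSpace ℝ X] [CompleteSpace X]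
    (A : AffineSubspace ℝ X) (hA : (A : Set X).Nonempty) (hAc : IsClosed (A : Set X))
    (v : X) (hv : ‖v‖ = 1) (β : ℝ) (B : Set X) (hB : B = {y : X | ⟪y, v⟫ = β})
    (hPU : metricProj (A.direction : Set X) v ≠ 0) (x : X) :
    metricProj ((A : Set X) ∩ B) x
      = metricProj (A : Set X) x
        + ((β - ⟪metricProj (A : Set X) x, v⟫) / ‖metricProj (A.direction : Set X) v‖ ^ 2)
            • metricProj (A.direction : Set X) v := by
  have hUc : IsClosed (A.direction : Set X) := A.isClosed_direction_iff.mpr hAc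
  -- the direction subspace as an affine subspace for projection facts
  obtain ⟨hpA, hpOrth⟩ := metricProj_affine_spec A hA hAc x
  set p := metricProj (A : Set X) x with hp
  obtain ⟨huU, huOrth⟩ := metricProj_affine_spec (A.direction.toAffineSubspace) ⟨0, by simp⟩
      hUc v
  set u := metricProj (A.direction : Set X) v with hu
  have huOrth' : ∀ w ∈ A.direction, ⟪v - u, w⟫ = 0 := by
    intro w hw
    exact huOrth w (by simpa using hw)
  have huU' : u ∈ A.direction := huU
  -- ⟪u, v⟫ = ‖u‖²
  have hud : ⟪u, v⟫ = ‖u‖ ^ 2 := by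
    have := huOrth' u huU'
    have h' : ⟪v, u⟫ - ⟪u, u⟫ = 0 := by
      rw [← inner_sub_left]; exact this
    rw [real_inner_comm]
    rw [real_inner_self_eq_norm_sq] at h'
    linarith
  have hun : ‖u‖ ^ 2 ≠ 0 := pow_ne_zero 2 (norm_ne_zero_iff.mpr hPU)
  set c : ℝ := (β - ⟪p, v⟫) / ‖u‖ ^ 2 with hc
  set q : X := p + c • u with hq
  have hqA : q ∈ A := by
    have : c • u +ᵥ p ∈ A :=
      AffineSubspace.vadd_mem_of_mem_direction (A.direction.smul_mem c huU') hpA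
    simpa [hq, vadd_eq_add, add_comm] using this
  have hqB : ⟪q, v⟫ = β := by
    rw [hq, inner_add_left, real_inner_smul_left, hud, hc]
    field_simp
    ring
  -- closedness / convexity of A ∩ B
  have hBc : IsClosed B := by
    rw [hB]
    exact isClosed_eq (Continuous.inner continuous_id continuous_const) continuous_const
  have hBconv : Convex ℝ B := by
    rw [hB]
    exact convex_hyperplane (f := fun y => ⟪y, v⟫)
      ⟨fun a b => inner_add_left a b v, fun r a => real_inner_smul_left a v r⟩ β
  have hqmem : q ∈ (A : Set X) ∩ B := ⟨hqA, by rw [hB]; exact hqB⟩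
  refine metricProj_eq_of ⟨q, hqmem⟩ (hAc.inter hBc) ((A.convex).inter hBconv) hqmem ?_
  rintro w ⟨hwA, hwB⟩
  rw [hB] at hwB
  have hwq : w - q ∈ A.direction := AffineSubspace.vsub_mem_direction hwA hqA
  have hwqv : ⟪w - q, v⟫ = 0 := by
    rw [inner_sub_left, hwB, hqB, sub_self]
  -- x - q = (x - p) - c • u
  have hxq : x - q = (x - p) - c • u := by rw [hq]; abel
  have h1 : ⟪x - p, w - q⟫ = 0 := hpOrth _ hwq
  have h2 : ⟪u, w - q⟫ = 0 := by
    have h3 := huOrth' _ hwq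
    have h4 : ⟪v, w - q⟫ - ⟪u, w - q⟫ = 0 := by rw [← inner_sub_left]; exact h3
    have h5 : ⟪v, w - q⟫ = 0 := by rw [real_inner_comm]; exact hwqv
    linarith
  rw [hxq, inner_sub_left, h1, real_inner_smul_left, h2]
  simp
end

section
/- Let X be a real Hilbert space, let A be a nonempty closed affine subspace of X with parallel subspace U := A − A, and let B := {x ∈ X : ⟨x, v⟩ = β} be a hyperplane with ‖v‖ = 1. Then the set B − A = {b − a : b ∈ B, a ∈ A} is a closed affine subspace of X. -/
/-!
With `f := ⟪·, v⟫`, a point `x` lies in `f ⁻¹' {β} - A` exactly when `f x = β - f a` for some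
`a ∈ A`. So `B - A` is the preimage under the continuous linear map `f` of the image of `A` under
the affine map `a ↦ β - f a`; that image is an affine subspace of the finite-dimensional space `ℝ`,
hence closed, and preimages of affine subspaces are affine subspaces.
-/

open RealInnerProductSpace Pointwise

theorem Set.preimage_singleton_sub {E F G : Type*} [AddGroup E] [AddGroup F] [FunLike G E F]
    [AddMonoidHomClass G E F] (f : G) (β : F) (s : Set E) :
    f ⁻¹' {β} - s = f ⁻¹' ((β - f ·) '' s) := by
  ext x
  simp only [Set.mem_sub, Set.mem_preimage, Set.mem_singleton_iff, Set.mem_image]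
  constructor
  · rintro ⟨b, rfl, a, ha, rfl⟩
    exact ⟨a, ha, (map_sub f b a).symm⟩
  · rintro ⟨a, ha, hx⟩
    exact ⟨x + a, by rw [map_add, ← hx, sub_add_cancel], a, ha, add_sub_cancel_right x a⟩

namespace AffineSubspace

theorem coe_preimage_singleton_sub {k E F : Type*} [Ring k] [AddCommGroup E] [Module k E]
    [AddCommGroup F] [Module k F] (f : E →ₗ[k] F) (β : F) (A : AffineSubspace k E) :
    f ⁻¹' {β} - (A : Set E) =
      ((A.map (AffineMap.const k E β - f.toAffineMap)).comap f.toAffineMap : Set E) := by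
  rw [coe_comap, coe_map, Set.preimage_singleton_sub]
  rfl

theorem isClosed_preimage_singleton_sub {𝕜 E F : Type*} [NontriviallyNormedField 𝕜]
    [CompleteSpace 𝕜] [NormedAddCommGroup E] [NormedSpace 𝕜 E] [NormedAddCommGroup F]
    [NormedSpace 𝕜 F] [FiniteDimensional 𝕜 F] (f : E →L[𝕜] F) (β : F)
    (A : AffineSubspace 𝕜 E) : IsClosed (f ⁻¹' {β} - (A : Set E)) := by
  have h := A.coe_preimage_singleton_sub (f : E →ₗ[𝕜] F) β
  rw [ContinuousLinearMap.coe_coe] at h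
  rw [h, coe_comap]
  exact (closed_of_finiteDimensional _).preimage f.continuous

end AffineSubspace

theorem hyperplane_sub_affine_isClosed_affine_general
    {X : Type*} [NormedAddCommGroup X] [InnerProductSpace ℝ X]
    (A : AffineSubspace ℝ X)
    (v : X) (β : ℝ) (B : Set X) (hB : B = {y : X | ⟪y, v⟫ = β}) :
    IsClosed (B - (A : Set X)) ∧ ∃ S : AffineSubspace ℝ X, (S : Set X) = B - (A : Set X) := by
  obtain rfl : B = innerSL ℝ v ⁻¹' {β} := by
    ext y
    simp [hB, real_inner_comm]
  exact ⟨A.isClosed_preimage_singleton_sub (innerSL ℝ v) β,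
    _, (A.coe_preimage_singleton_sub (innerSL ℝ v : X →ₗ[ℝ] ℝ) β).symm⟩

theorem hyperplane_sub_affine_isClosed_affine
    {X : Type*} [NormedAddCommGroup X] [InnerProductSpace ℝ X] [CompleteSpace X]
    (A : AffineSubspace ℝ X) (hA : (A : Set X).Nonempty) (hAc : IsClosed (A : Set X))
    (v : X) (hv : ‖v‖ = 1) (β : ℝ) (B : Set X) (hB : B = {y : X | ⟪y, v⟫ = β}) :
    IsClosed (B - (A : Set X)) ∧ ∃ S : AffineSubspace ℝ X, (S : Set X) = B - (A : Set X) :=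
  hyperplane_sub_affine_isClosed_affine_general A v β B hB
end

section
/- Let X be a real Hilbert space, let A be a nonempty closed affine subspace of X with parallel subspace U := A − A, and let B := {x ∈ X : ⟨x, v⟩ = β} be a hyperplane with ‖v‖ = 1. Let g := P_{B−A}(0) be the projection of the origin onto the closed affine subspace B − A. If P_U(v) = 0, then A ⊆ B − g, and consequently A ∩ (B − g) = A. -/
open RealInnerProductSpace Pointwise

lemma exists_min_point {X : Type*} [NormedAddCommGroup X] [InnerProductSpace ℝ X]
    [CompleteSpace X] {C : Set X} (hne : C.Nonempty) (hc : IsClosed C) (hconv : Convex ℝ C)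
    (x : X) : ∃ p ∈ C, ∀ q ∈ C, ‖x - p‖ ≤ ‖x - q‖ := by
  obtain ⟨p, hp, hmin⟩ := exists_norm_eq_iInf_of_complete_convex hne hc.isComplete hconv x
  refine ⟨p, hp, fun q hq => ?_⟩
  rw [hmin]
  exact ciInf_le ⟨0, by rintro _ ⟨w, rfl⟩; exact norm_nonneg _⟩ (⟨q, hq⟩ : C)

lemma metricProj_spec_s3 {X : Type*} [NormedAddCommGroup X] [InnerProductSpace ℝ X]
    {C : Set X} {x : X} (h : ∃ p ∈ C, ∀ q ∈ C, ‖x - p‖ ≤ ‖x - q‖) :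
    metricProj C x ∈ C ∧ ∀ q ∈ C, ‖x - metricProj C x‖ ≤ ‖x - q‖ := by
  unfold metricProj
  rw [dif_pos h]
  exact ⟨h.choose_spec.1, h.choose_spec.2⟩

theorem affine_subset_hyperplane_sub_gap_of_projDir_eq_zero
    {X : Type*} [NormedAddCommGroup X] [InnerProductSpace ℝ X] [CompleteSpace X]
    (A : AffineSubspace ℝ X) (hA : (A : Set X).Nonempty) (hAc : IsClosed (A : Set X))
    (v : X) (hv : ‖v‖ = 1) (β : ℝ) (B : Set X) (hB : B = {y : X | ⟪y, v⟫ = β})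
    (g : X) (hg : g = metricProj (B - (A : Set X)) 0)
    (hPU : metricProj (A.direction : Set X) v = 0) :
    (A : Set X) ⊆ (fun y => y - g) '' B ∧
      (A : Set X) ∩ ((fun y => y - g) '' B) = (A : Set X) := by
  obtain ⟨a₀, ha₀⟩ := hA
  set U := A.direction with hUdef
  -- U is closed
  have hUc : IsClosed (U : Set X) := A.isClosed_direction_iff.2 hAc
  -- v is orthogonal to U
  have horth : ∀ w ∈ U, ⟪v, w⟫ = 0 := by
    have hex : ∃ p ∈ (U : Set X), ∀ q ∈ (U : Set X), ‖v - p‖ ≤ ‖v - q‖ :=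
      exists_min_point ⟨0, U.zero_mem⟩ hUc U.convex v
    have hspec := metricProj_spec_s3 hex
    rw [hPU] at hspec
    have hinf : ‖v - 0‖ = ⨅ w : (U : Set X), ‖v - w‖ := by
      apply le_antisymm
      · exact le_ciInf fun w => hspec.2 w w.2
      · exact ciInf_le ⟨0, by rintro _ ⟨w, rfl⟩; exact norm_nonneg _⟩
          (⟨0, U.zero_mem⟩ : (U : Set X))
    have := (Submodule.norm_eq_iInf_iff_real_inner_eq_zero U U.zero_mem).1 hinf
    simpa using this
  -- inner product with v is constant α on A
  set α := ⟪a₀, v⟫ with hα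
  have hconst : ∀ a ∈ A, ⟪a, v⟫ = α := by
    intro a ha
    have hmem : a - a₀ ∈ U := AffineSubspace.vsub_mem_direction ha ha₀
    have := horth _ hmem
    rw [real_inner_comm] at this
    rw [inner_sub_left] at this
    linarith
  -- B - A is the hyperplane at level β - α
  have hBA : B - (A : Set X) = {x : X | ⟪x, v⟫ = β - α} := by
    ext x
    constructor
    · rintro ⟨b, hb, a, ha, rfl⟩
      have hbv : ⟪b, v⟫ = β := by rw [hB] at hb; exact hb
      have hav := hconst a ha
      simp only [Set.mem_setOf_eq, inner_sub_left]
      rw [hbv, hav]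
    · intro hx
      refine ⟨x + a₀, ?_, a₀, ha₀, add_sub_cancel_right x a₀⟩
      rw [hB]
      simp only [Set.mem_setOf_eq, inner_add_left]
      simp only [Set.mem_setOf_eq] at hx
      rw [hx, ← hα]; ring
  -- properties of the hyperplane H
  have hHc : IsClosed {x : X | ⟪x, v⟫ = β - α} := by
    have : {x : X | ⟪x, v⟫ = β - α} = (fun x => ⟪x, v⟫) ⁻¹' {β - α} := rfl
    rw [this]
    exact IsClosed.preimage (continuous_id.inner continuous_const) isClosed_singleton
  have hHconv : Convex ℝ {x : X | ⟪x, v⟫ = β - α} := by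
    intro x hx y hy s t hs ht hst
    simp only [Set.mem_setOf_eq] at hx hy ⊢
    rw [inner_add_left, real_inner_smul_left, real_inner_smul_left, hx, hy]
    linear_combination (β - α) * hst
  have hHne : ({x : X | ⟪x, v⟫ = β - α} : Set X).Nonempty := by
    refine ⟨(β - α) • v, ?_⟩
    simp only [Set.mem_setOf_eq, real_inner_smul_left, real_inner_self_eq_norm_sq, hv]
    ring
  -- g lies in B - A, hence ⟪g, v⟫ = β - α
  have hgmem : g ∈ B - (A : Set X) := by
    rw [hg, hBA]
    exact (metricProj_spec_s3 (exists_min_point hHne hHc hHconv 0)).1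
  rw [hBA] at hgmem
  have hgv : ⟪g, v⟫ = β - α := hgmem
  -- conclusion
  have hsub : (A : Set X) ⊆ (fun y => y - g) '' B := by
    intro a ha
    refine ⟨a + g, ?_, add_sub_cancel_right a g⟩
    rw [hB]
    simp only [Set.mem_setOf_eq, inner_add_left]
    rw [hconst a ha, hgv]; ring
  exact ⟨hsub, Set.inter_eq_left.2 hsub⟩
end

section
/- Let X be a real Hilbert space, let A be a nonempty closed affine subspace of X with parallel subspace U := A − A, and let B := {x ∈ X : ⟨x, v⟩ = β} be a hyperplane with ‖v‖ = 1. Suppose P_U(v) ≠ 0. Then for every c ∈ A ∩ B, the orthogonal complement of (A ∩ B) − c equals U^⊥ + ℝv, i.e. ((A ∩ B) − c)^⊥ = U^⊥ + ℝv; in particular the subspace U^⊥ + ℝv is closed. -/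
open RealInnerProductSpace Pointwise

theorem orthoComplement_inter_sub_point_of_projDir_ne_zero
    {X : Type*} [NormedAddCommGroup X] [InnerProductSpace ℝ X] [CompleteSpace X]
    (A : AffineSubspace ℝ X) (hA : (A : Set X).Nonempty) (hAc : IsClosed (A : Set X))
    (v : X) (hv : ‖v‖ = 1) (β : ℝ) (B : Set X) (hB : B = {y : X | ⟪y, v⟫ = β})
    (hPU : metricProj (A.direction : Set X) v ≠ 0) :
    ∀ c ∈ (A : Set X) ∩ B,
      {y : X | ∀ z ∈ (fun w => w - c) '' ((A : Set X) ∩ B), ⟪z, y⟫ = 0}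
          = (A.directionᗮ : Set X) + ((Submodule.span ℝ {v} : Submodule ℝ X) : Set X) ∧
        IsClosed ((A.directionᗮ : Set X) + ((Submodule.span ℝ {v} : Submodule ℝ X) : Set X)) := by
  intro c hc
  obtain ⟨hcA, hcB⟩ := hc
  set U := A.direction with hU
  have hUc : IsClosed (U : Set X) := A.isClosed_direction_iff.mpr hAc
  haveI : CompleteSpace U := hUc.completeSpace_coe
  set M : Submodule ℝ X := U ⊓ (Submodule.span ℝ {v})ᗮ with hM
  -- the image set equals M
  have himg : (fun w => w - c) '' ((A : Set X) ∩ B) = (M : Set X) := by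
    ext z
    simp only [SetLike.mem_coe, hM, Submodule.mem_inf,
      Submodule.mem_orthogonal_singleton_iff_inner_left]
    constructor
    · rintro ⟨w, ⟨hwA, hwB⟩, rfl⟩
      have hw' : ⟪w, v⟫ = β := by rw [hB] at hwB; exact hwB
      have hc' : ⟪c, v⟫ = β := by rw [hB] at hcB; exact hcB
      exact ⟨A.vsub_mem_direction hwA hcA, by simp [inner_sub_left, hw', hc']⟩
    · rintro ⟨hzU, hzv⟩
      refine ⟨c + z, ⟨?_, ?_⟩, by simp⟩
      · have := A.vadd_mem_of_mem_direction hzU hcA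
        simpa [add_comm] using this
      · rw [hB]
        have hc' : ⟪c, v⟫ = β := by rw [hB] at hcB; exact hcB
        simp [Set.mem_setOf_eq, inner_add_left, hc', hzv]
  -- LHS set equals Mᗮ
  have hset : {y : X | ∀ z ∈ (fun w => w - c) '' ((A : Set X) ∩ B), ⟪z, y⟫ = 0}
      = ((Mᗮ : Submodule ℝ X) : Set X) := by
    ext y
    simp only [Set.mem_setOf_eq, himg, SetLike.mem_coe, Submodule.mem_orthogonal]
  -- Mᗮ = Uᗮ + span v
  have hmain : ((Mᗮ : Submodule ℝ X) : Set X)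
      = (Uᗮ : Set X) + ((Submodule.span ℝ {v} : Submodule ℝ X) : Set X) := by
    ext y
    constructor
    · intro hy
      rw [SetLike.mem_coe, Submodule.mem_orthogonal] at hy
      set p : X := (U.orthogonalProjectionOnto y : X) with hp
      set w : X := (U.orthogonalProjectionOnto v : X) with hw
      have hpU : p ∈ U := (U.orthogonalProjectionOnto y).2
      have hwU : w ∈ U := (U.orthogonalProjectionOnto v).2
      have hyp : y - p ∈ Uᗮ := U.sub_starProjection_mem_orthogonal y
      have hvw : v - w ∈ Uᗮ := U.sub_starProjection_mem_orthogonal v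
      set s : ℝ := ⟪w, p⟫ / ‖w‖ ^ 2 with hs
      set z : X := p - s • w with hz
      have hzU : z ∈ U := U.sub_mem hpU (U.smul_mem s hwU)
      have hwz : ⟪w, z⟫ = 0 := by
        have e : ⟪w, z⟫ = ⟪w, p⟫ - s * ⟪w, w⟫ := by
          rw [hz, inner_sub_right, real_inner_smul_right]
        rw [e, real_inner_self_eq_norm_sq]
        by_cases h0 : w = 0
        · simp [h0]
        · have hn : ‖w‖ ^ 2 ≠ 0 := pow_ne_zero _ (norm_ne_zero_iff.mpr h0)
          rw [hs, div_mul_cancel₀ _ hn, sub_self]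
      have hvz : ⟪v, z⟫ = 0 := by
        have h1 : ⟪z, v - w⟫ = 0 := hvw z hzU
        have h1' : ⟪v - w, z⟫ = 0 := by rw [real_inner_comm]; exact h1
        have e : ⟪v, z⟫ = ⟪v - w, z⟫ + ⟪w, z⟫ := by rw [inner_sub_left]; ring
        rw [e, h1', hwz, add_zero]
      have hzM : z ∈ M := by
        rw [hM, Submodule.mem_inf, Submodule.mem_orthogonal_singleton_iff_inner_right]
        exact ⟨hzU, hvz⟩
      have hzy : ⟪z, y⟫ = 0 := hy z hzM
      have h1 : ⟪z, y - p⟫ = 0 := hyp z hzU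
      have h2 : ⟪z, p⟫ = 0 := by
        have e : ⟪z, y⟫ = ⟪z, y - p⟫ + ⟪z, p⟫ := by
          rw [← inner_add_right]; congr 1; abel
        rw [hzy, h1] at e
        linarith
      have hzz : ⟪z, z⟫ = 0 := by
        have e : ⟪z, z⟫ = ⟪z, p - s • w⟫ := by rw [← hz]
        rw [e, inner_sub_right, real_inner_smul_right, h2]
        have h3 : ⟪z, w⟫ = 0 := by rw [real_inner_comm]; exact hwz
        rw [h3]; ring
      have hz0 : z = 0 := by
        have := real_inner_self_eq_norm_sq z
        rw [hzz] at this
        have : ‖z‖ = 0 := by nlinarith [norm_nonneg z]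
        exact norm_eq_zero.mp this
      have hps : p = s • w := by
        have h := hz0
        rw [hz, sub_eq_zero] at h
        exact h
      refine Set.mem_add.mpr ⟨y - s • v, ?_, s • v, ?_, by abel⟩
      · have e : y - s • v = (y - p) + s • (w - v) := by rw [hps]; module
        rw [e]
        exact Uᗮ.add_mem hyp (Uᗮ.smul_mem s (by simpa using Uᗮ.neg_mem hvw))
      · exact Submodule.mem_span_singleton.mpr ⟨s, rfl⟩
    · intro hy
      obtain ⟨a, ha, b, hb, rfl⟩ := Set.mem_add.mp hy
      rw [SetLike.mem_coe] at ha hb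
      obtain ⟨t, rfl⟩ := Submodule.mem_span_singleton.mp hb
      rw [SetLike.mem_coe, Submodule.mem_orthogonal]
      intro z hzM
      rw [hM, Submodule.mem_inf, Submodule.mem_orthogonal_singleton_iff_inner_right] at hzM
      obtain ⟨hzU, hzv⟩ := hzM
      have h1 : ⟪z, a⟫ = 0 := ha z hzU
      have h2 : ⟪z, v⟫ = 0 := by rw [real_inner_comm]; exact hzv
      rw [inner_add_right, h1, real_inner_smul_right, h2]
      ring
  refine ⟨by rw [hset, hmain], ?_⟩
  rw [← hmain]
  exact Submodule.isClosed_orthogonal M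
end

section
/- Let X be a real Hilbert space, let A be a nonempty closed affine subspace of X with parallel subspace U := A − A, and let H := {x ∈ X : ⟨x, c⟩ = γ} be a hyperplane, where c ∈ X, c ≠ 0, and γ ∈ ℝ. Let x ∈ X. If P_U(c) = 0 and ⟨P_A(x), c⟩ ≠ γ, then A ∩ H = ∅, the fixed-point set Fix(P_A ∘ P_H) := {z ∈ X : P_A(P_H(z)) = z} is a nonempty closed affine subspace, and P_{Fix(P_A∘P_H)}(x) = P_A(x). -/
open RealInnerProductSpace Pointwise

section Aux

variable {X : Type*} [NormedAddCommGroup X] [InnerProductSpace ℝ X] [CompleteSpace X]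

private lemma mp_exists {C : Set X} (hne : C.Nonempty) (hcl : IsClosed C) (hcv : Convex ℝ C)
    (x : X) : ∃ p ∈ C, ∀ q ∈ C, ‖x - p‖ ≤ ‖x - q‖ := by
  obtain ⟨y, hy, hmin⟩ := exists_norm_eq_iInf_of_complete_convex hne hcl.isComplete hcv x
  refine ⟨y, hy, fun q hq => ?_⟩
  rw [hmin]
  exact ciInf_le ⟨0, by rintro r ⟨w, rfl⟩; exact norm_nonneg _⟩ (⟨q, hq⟩ : C)

private lemma mp_spec {C : Set X} (hne : C.Nonempty) (hcl : IsClosed C) (hcv : Convex ℝ C)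
    (x : X) : metricProj C x ∈ C ∧ ∀ q ∈ C, ‖x - metricProj C x‖ ≤ ‖x - q‖ := by
  have h := mp_exists hne hcl hcv x
  rw [metricProj]
  rw [dif_pos h]
  exact ⟨h.choose_spec.1, h.choose_spec.2⟩

private lemma mp_var {C : Set X} (hne : C.Nonempty) (hcl : IsClosed C) (hcv : Convex ℝ C)
    (x : X) : ∀ q ∈ C, ⟪x - metricProj C x, q - metricProj C x⟫ ≤ 0 := by
  haveI : Nonempty C := hne.to_subtype
  obtain ⟨hm, hmin⟩ := mp_spec hne hcl hcv x
  have heq : ‖x - metricProj C x‖ = ⨅ w : C, ‖x - w‖ :=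
    le_antisymm (le_ciInf fun w => hmin w w.2)
      (ciInf_le ⟨0, by rintro r ⟨w, rfl⟩; exact norm_nonneg _⟩ (⟨_, hm⟩ : C))
  exact (norm_eq_iInf_iff_real_inner_le_zero hcv hm).1 heq

private lemma mp_eq {C : Set X} (hne : C.Nonempty) (hcl : IsClosed C) (hcv : Convex ℝ C)
    {x p : X} (hp : p ∈ C) (hvar : ∀ q ∈ C, ⟪x - p, q - p⟫ ≤ 0) :
    metricProj C x = p := by
  have hmC := (mp_spec hne hcl hcv x).1
  have h1 := mp_var hne hcl hcv x p hp
  have h2 := hvar _ hmC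
  set m := metricProj C x
  have expand : ⟪x - m, p - m⟫ + ⟪x - p, m - p⟫ = ⟪m - p, m - p⟫ := by
    rw [show p - m = -(m - p) from (neg_sub m p).symm, inner_neg_right,
        show x - m = (x - p) - (m - p) by abel, inner_sub_left]
    ring
  have key : ⟪m - p, m - p⟫ ≤ 0 := by linarith
  have h0 : m - p = 0 := inner_self_eq_zero.mp (le_antisymm key real_inner_self_nonneg)
  exact sub_eq_zero.mp h0

end Aux

theorem trichotomy_case_two
    {X : Type*} [NormedAddCommGroup X] [InnerProductSpace ℝ X] [CompleteSpace X]
    (A : AffineSubspace ℝ X) (hA : (A : Set X).Nonempty) (hAc : IsClosed (A : Set X))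
    (c : X) (hc : c ≠ 0) (γ : ℝ) (H : Set X) (hH : H = {y : X | ⟪y, c⟫ = γ})
    (x : X) (hPU : metricProj (A.direction : Set X) c = 0)
    (hx : ⟪metricProj (A : Set X) x, c⟫ ≠ γ)
    (F : Set X) (hF : F = {z : X | metricProj (A : Set X) (metricProj H z) = z}) :
    (A : Set X) ∩ H = ∅ ∧
      F.Nonempty ∧ IsClosed F ∧ (∃ S : AffineSubspace ℝ X, (S : Set X) = F) ∧
      metricProj F x = metricProj (A : Set X) x := by
  obtain ⟨a₀, ha₀⟩ := hA
  have hAcv : Convex ℝ (A : Set X) := A.convex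
  have hAne : (A : Set X).Nonempty := ⟨a₀, ha₀⟩
  -- direction is closed, convex, nonempty
  have hUset : (A.direction : Set X) = (fun v => v + a₀) ⁻¹' (A : Set X) := by
    ext v
    simp only [Set.mem_preimage, SetLike.mem_coe]
    rw [← AffineSubspace.vadd_mem_iff_mem_direction v ha₀]
    rfl
  have hUcl : IsClosed (A.direction : Set X) := by
    rw [hUset]
    exact hAc.preimage (continuous_id.add continuous_const)
  have hUcv : Convex ℝ (A.direction : Set X) := A.direction.convex
  have hUne : (A.direction : Set X).Nonempty := ⟨0, A.direction.zero_mem⟩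
  -- c is orthogonal to the direction
  have hcU : ∀ u ∈ A.direction, ⟪u, c⟫ = 0 := by
    have hvar := mp_var hUne hUcl hUcv c
    rw [hPU] at hvar
    intro u hu
    have h1 := hvar u hu
    have h2 := hvar (-u) (A.direction.neg_mem hu)
    simp only [sub_zero, inner_neg_right] at h1 h2
    rw [real_inner_comm]
    linarith
  -- ⟪·, c⟫ is constant on A
  have hconst : ∀ a ∈ A, ∀ b ∈ A, ⟪a, c⟫ = ⟪b, c⟫ := by
    intro a ha b hb
    have h0 : ⟪a - b, c⟫ = 0 := hcU _ (AffineSubspace.vsub_mem_direction ha hb)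
    rw [inner_sub_left] at h0
    linarith
  have hPAx : metricProj (A : Set X) x ∈ (A : Set X) := (mp_spec hAne hAc hAcv x).1
  -- A ∩ H = ∅
  have hAH : (A : Set X) ∩ H = ∅ := by
    ext y
    simp only [Set.mem_inter_iff, Set.mem_empty_iff_false, iff_false, not_and]
    intro hyA hyH
    rw [hH] at hyH
    exact hx ((hconst _ hPAx _ hyA).trans hyH)
  -- facts about H
  have hnc2 : (‖c‖ : ℝ) ^ 2 ≠ 0 := pow_ne_zero 2 (norm_ne_zero_iff.mpr hc)
  have hHne : H.Nonempty := by
    refine ⟨(γ / ‖c‖ ^ 2) • c, ?_⟩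
    rw [hH]
    simp only [Set.mem_setOf_eq, real_inner_smul_left, real_inner_self_eq_norm_sq]
    field_simp
  have hHcl : IsClosed H := by
    rw [hH]
    exact isClosed_eq (continuous_id.inner continuous_const) continuous_const
  have hHcv : Convex ℝ H := by
    rw [hH]
    intro y hy z hz a b ha hb hab
    simp only [Set.mem_setOf_eq] at hy hz ⊢
    rw [inner_add_left, real_inner_smul_left, real_inner_smul_left, hy, hz, ← add_mul, hab,
      one_mul]
  -- formula for the projection onto H
  have hPH : ∀ z : X, metricProj H z = z - ((⟪z, c⟫ - γ) / ‖c‖ ^ 2) • c := by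
    intro z
    set t := (⟪z, c⟫ - γ) / ‖c‖ ^ 2 with ht
    have hmem : z - t • c ∈ H := by
      rw [hH]
      simp only [Set.mem_setOf_eq, inner_sub_left, real_inner_smul_left,
        real_inner_self_eq_norm_sq, ht]
      field_simp
      ring
    refine mp_eq hHne hHcl hHcv hmem fun q hq => ?_
    have h1 : ⟪q, c⟫ = γ := by rw [hH] at hq; exact hq
    have h2 : ⟪z - t • c, c⟫ = γ := by rw [hH] at hmem; exact hmem
    have h1' : ⟪c, q⟫ = γ := by rwa [real_inner_comm] at h1
    have h2' : ⟪c, z - t • c⟫ = γ := by rwa [real_inner_comm] at h2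
    have e : z - (z - t • c) = t • c := by abel
    rw [e, real_inner_smul_left, inner_sub_right, h1', h2', sub_self, mul_zero]
  -- the fixed-point set equals A
  have hFA : F = (A : Set X) := by
    rw [hF]
    ext z
    simp only [Set.mem_setOf_eq, SetLike.mem_coe]
    constructor
    · intro hz
      rw [← hz]
      exact (mp_spec hAne hAc hAcv _).1
    · intro hz
      rw [hPH z]
      refine mp_eq hAne hAc hAcv hz fun q hq => ?_
      have h0 : ⟪q - z, c⟫ = 0 := hcU _ (AffineSubspace.vsub_mem_direction hq hz)
      have e : z - ((⟪z, c⟫ - γ) / ‖c‖ ^ 2) • c - z = -(((⟪z, c⟫ - γ) / ‖c‖ ^ 2) • c) := by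
        abel
      have h0' : ⟪c, q - z⟫ = 0 := by rwa [real_inner_comm] at h0
      rw [e, inner_neg_left, real_inner_smul_left, h0', mul_zero, neg_zero]
  refine ⟨hAH, ?_, ?_, ⟨A, hFA.symm⟩, ?_⟩
  · rw [hFA]; exact hAne
  · rw [hFA]; exact hAc
  · rw [hFA]
end

section
/- Let X be a real Hilbert space and let H₁ := {x ∈ X : ⟨x, c₁⟩ = γ₁} and H₂ := {x ∈ X : ⟨x, c₂⟩ = γ₂} be hyperplanes, where c₁, c₂ ∈ X \ {0} and γ₁, γ₂ ∈ ℝ. Let x ∈ X. If ⟨c₁, c₂⟩² = ‖c₁‖²‖c₂‖² and ‖c₁‖²(⟨x, c₂⟩ − γ₂) ≠ ⟨c₁, c₂⟩(⟨x, c₁⟩ − γ₁), then H₁ ∩ H₂ = ∅ (H₁ and H₂ are parallel but distinct) and P_{Fix(P_{H₁}∘P_{H₂})}(x) = P_{H₁}(x) = x − ((⟨x, c₁⟩ − γ₁)/‖c₁‖²) · c₁, where Fix(P_{H₁}∘P_{H₂}) := {z ∈ X : P_{H₁}(P_{H₂}(z)) = z}. -/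
open RealInnerProductSpace Pointwise

lemma metricProj_hyperplane {X : Type*} [NormedAddCommGroup X] [InnerProductSpace ℝ X]
    (c : X) (hc : c ≠ 0) (γ : ℝ) (x : X) :
    metricProj {y : X | ⟪y, c⟫ = γ} x = x - ((⟪x, c⟫ - γ) / ‖c‖ ^ 2) • c := by
  have hcn : ‖c‖ ^ 2 ≠ 0 := pow_ne_zero 2 (norm_ne_zero_iff.mpr hc)
  set t : ℝ := (⟪x, c⟫ - γ) / ‖c‖ ^ 2 with ht
  set p : X := x - t • c with hp
  have hpc : ⟪p, c⟫ = γ := by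
    rw [hp, inner_sub_left, real_inner_smul_left, real_inner_self_eq_norm_sq, ht]
    field_simp
    ring
  have key : ∀ q ∈ {y : X | ⟪y, c⟫ = γ}, ‖x - q‖ ^ 2 = ‖x - p‖ ^ 2 + ‖p - q‖ ^ 2 := by
    intro q hq
    have hxq : x - q = (x - p) + (p - q) := by abel
    have horth : ⟪x - p, p - q⟫ = 0 := by
      have hxp : x - p = t • c := by rw [hp]; abel
      have hcp : ⟪c, p⟫ = γ := by rw [real_inner_comm]; exact hpc
      have hcq : ⟪c, q⟫ = γ := by rw [real_inner_comm]; exact hq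
      rw [hxp, real_inner_smul_left, inner_sub_right, hcp, hcq]
      ring
    rw [hxq, norm_add_sq_real, horth]
    ring
  have hmin : ∀ q ∈ {y : X | ⟪y, c⟫ = γ}, ‖x - p‖ ≤ ‖x - q‖ := by
    intro q hq
    have := key q hq
    nlinarith [norm_nonneg (p - q), norm_nonneg (x - q), norm_nonneg (x - p)]
  have hex : ∃ p ∈ {y : X | ⟪y, c⟫ = γ}, ∀ q ∈ {y : X | ⟪y, c⟫ = γ}, ‖x - p‖ ≤ ‖x - q‖ :=
    ⟨p, hpc, hmin⟩
  rw [metricProj]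
  rw [dif_pos hex]
  obtain ⟨hmem, hminc⟩ := hex.choose_spec
  set m := hex.choose with hm
  have h1 : ‖x - m‖ ≤ ‖x - p‖ := hminc p hpc
  have h2 : ‖x - m‖ ^ 2 = ‖x - p‖ ^ 2 + ‖p - m‖ ^ 2 := key m hmem
  have : ‖p - m‖ ^ 2 ≤ 0 := by nlinarith [norm_nonneg (x - m), norm_nonneg (x - p)]
  have hpm : p - m = 0 := by
    have := pow_eq_zero_iff (n := 2) (by norm_num) |>.mp
      (le_antisymm this (by positivity))
    exact norm_eq_zero.mp this
  have : m = p := by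
    have := sub_eq_zero.mp hpm; exact this.symm
  rw [this]

theorem two_hyperplanes_case_two
    {X : Type*} [NormedAddCommGroup X] [InnerProductSpace ℝ X] [CompleteSpace X]
    (c₁ c₂ : X) (hc₁ : c₁ ≠ 0) (hc₂ : c₂ ≠ 0) (γ₁ γ₂ : ℝ)
    (H₁ H₂ : Set X) (hH₁ : H₁ = {y : X | ⟪y, c₁⟫ = γ₁}) (hH₂ : H₂ = {y : X | ⟪y, c₂⟫ = γ₂})
    (x : X)
    (h1 : ⟪c₁, c₂⟫ ^ 2 = ‖c₁‖ ^ 2 * ‖c₂‖ ^ 2)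
    (h2 : ‖c₁‖ ^ 2 * (⟪x, c₂⟫ - γ₂) ≠ ⟪c₁, c₂⟫ * (⟪x, c₁⟫ - γ₁)) :
    H₁ ∩ H₂ = ∅ ∧
      metricProj {z : X | metricProj H₁ (metricProj H₂ z) = z} x
        = x - ((⟪x, c₁⟫ - γ₁) / ‖c₁‖ ^ 2) • c₁ ∧
      metricProj H₁ x = x - ((⟪x, c₁⟫ - γ₁) / ‖c₁‖ ^ 2) • c₁ := by
  have hn1 : ‖c₁‖ ^ 2 ≠ 0 := pow_ne_zero 2 (norm_ne_zero_iff.mpr hc₁)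
  -- Cauchy-Schwarz equality: c₂ = r • c₁
  obtain ⟨r, hr0, hrc⟩ : ∃ r : ℝ, r ≠ 0 ∧ c₂ = r • c₁ := by
    have habs : |⟪c₁, c₂⟫ / (‖c₁‖ * ‖c₂‖)| = 1 := by
      rw [abs_div, abs_of_nonneg (by positivity : (0:ℝ) ≤ ‖c₁‖ * ‖c₂‖)]
      have : |⟪c₁, c₂⟫| = ‖c₁‖ * ‖c₂‖ :=
        (sq_eq_sq₀ (abs_nonneg _) (by positivity)).mp (by rw [sq_abs]; rw [h1]; ring)
      rw [this, div_self (ne_of_gt (mul_pos (norm_pos_iff.mpr hc₁) (norm_pos_iff.mpr hc₂)))]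
    exact ((abs_real_inner_div_norm_mul_norm_eq_one_iff c₁ c₂).mp habs).2
  -- key reformulation of h2 : r * γ₁ ≠ γ₂
  have hic : ⟪c₁, c₂⟫ = r * ‖c₁‖ ^ 2 := by
    rw [hrc, real_inner_smul_right, real_inner_self_eq_norm_sq]
  have hxc : ∀ y : X, ⟪y, c₂⟫ = r * ⟪y, c₁⟫ := fun y => by
    rw [hrc, real_inner_smul_right]
  have hγ : r * γ₁ ≠ γ₂ := by
    intro h
    apply h2
    rw [hxc x, hic, ← h]; ring
  -- the two hyperplanes are disjoint
  have hdisj : H₁ ∩ H₂ = ∅ := by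
    rw [hH₁, hH₂, Set.eq_empty_iff_forall_notMem]
    rintro y ⟨hy1, hy2⟩
    simp only [Set.mem_setOf_eq] at hy1 hy2
    exact hγ (by rw [← hy1, ← hxc y, hy2])
  -- projections
  have hproj1 : ∀ y : X, metricProj H₁ y = y - ((⟪y, c₁⟫ - γ₁) / ‖c₁‖ ^ 2) • c₁ := fun y => by
    rw [hH₁]; exact metricProj_hyperplane c₁ hc₁ γ₁ y
  have hproj2 : ∀ y : X, metricProj H₂ y = y - ((⟪y, c₂⟫ - γ₂) / ‖c₂‖ ^ 2) • c₂ := fun y => by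
    rw [hH₂]; exact metricProj_hyperplane c₂ hc₂ γ₂ y
  -- the fixed point set equals H₁
  have hfix : {z : X | metricProj H₁ (metricProj H₂ z) = z} = H₁ := by
    ext z
    simp only [Set.mem_setOf_eq]
    constructor
    · intro hz
      rw [hH₁, Set.mem_setOf_eq, ← hz, hproj1, inner_sub_left, real_inner_smul_left,
        real_inner_self_eq_norm_sq]
      field_simp
      ring
    · intro hz
      rw [hH₁, Set.mem_setOf_eq] at hz
      set w := metricProj H₂ z with hw
      have hwz : w = z - ((⟪z, c₂⟫ - γ₂) / ‖c₂‖ ^ 2) • c₂ := hproj2 z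
      set s : ℝ := (⟪z, c₂⟫ - γ₂) / ‖c₂‖ ^ 2 with hs
      have hwc : ⟪w, c₁⟫ = γ₁ - s * r * ‖c₁‖ ^ 2 := by
        rw [hwz, inner_sub_left, real_inner_smul_left, hz, hrc, real_inner_smul_left,
          real_inner_self_eq_norm_sq]
        ring
      rw [hproj1 w, hwc, hwz, hrc]
      have : (γ₁ - s * r * ‖c₁‖ ^ 2 - γ₁) / ‖c₁‖ ^ 2 = -(s * r) := by field_simp; ring
      rw [this]
      rw [smul_smul, neg_smul, sub_neg_eq_add, sub_add_cancel]
  refine ⟨hdisj, ?_, hproj1 x⟩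
  rw [hfix]
  exact hproj1 x
end

section
/- Let X be a real Hilbert space and let H₁ := {x ∈ X : ⟨x, c₁⟩ = γ₁} and H₂ := {x ∈ X : ⟨x, c₂⟩ = γ₂} be hyperplanes, where c₁, c₂ ∈ X \ {0} and γ₁, γ₂ ∈ ℝ. Let x ∈ X. If ⟨c₁, c₂⟩² ≠ ‖c₁‖²‖c₂‖², then H₁ ∩ H₂ ≠ ∅ and P_{H₁∩H₂}(x) = x + ((‖c₂‖²(γ₁ − ⟨x, c₁⟩) + ⟨c₁, c₂⟩(⟨x, c₂⟩ − γ₂))/(‖c₁‖²‖c₂‖² − ⟨c₁, c₂⟩²)) · c₁ + ((‖c₁‖²(γ₂ − ⟨x, c₂⟩) + ⟨c₁, c₂⟩(⟨x, c₁⟩ − γ₁))/(‖c₁‖²‖c₂‖² − ⟨c₁, c₂⟩²)) · c₂. -/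
open RealInnerProductSpace Pointwise

theorem two_hyperplanes_case_three
    {X : Type*} [NormedAddCommGroup X] [InnerProductSpace ℝ X] [CompleteSpace X]
    (c₁ c₂ : X) (hc₁ : c₁ ≠ 0) (hc₂ : c₂ ≠ 0) (γ₁ γ₂ : ℝ)
    (H₁ H₂ : Set X) (hH₁ : H₁ = {y : X | ⟪y, c₁⟫ = γ₁}) (hH₂ : H₂ = {y : X | ⟪y, c₂⟫ = γ₂})
    (x : X)
    (h1 : ⟪c₁, c₂⟫ ^ 2 ≠ ‖c₁‖ ^ 2 * ‖c₂‖ ^ 2) :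
    (H₁ ∩ H₂).Nonempty ∧
      metricProj (H₁ ∩ H₂) x
        = x
          + ((‖c₂‖ ^ 2 * (γ₁ - ⟪x, c₁⟫) + ⟪c₁, c₂⟫ * (⟪x, c₂⟫ - γ₂))
              / (‖c₁‖ ^ 2 * ‖c₂‖ ^ 2 - ⟪c₁, c₂⟫ ^ 2)) • c₁
          + ((‖c₁‖ ^ 2 * (γ₂ - ⟪x, c₂⟫) + ⟪c₁, c₂⟫ * (⟪x, c₁⟫ - γ₁))
              / (‖c₁‖ ^ 2 * ‖c₂‖ ^ 2 - ⟪c₁, c₂⟫ ^ 2)) • c₂ := by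
  subst hH₁ hH₂
  have hD0 : ‖c₁‖ ^ 2 * ‖c₂‖ ^ 2 - ⟪c₁, c₂⟫ ^ 2 ≠ 0 := sub_ne_zero.mpr (Ne.symm h1)
  set D := ‖c₁‖ ^ 2 * ‖c₂‖ ^ 2 - ⟪c₁, c₂⟫ ^ 2 with hD
  set a := (‖c₂‖ ^ 2 * (γ₁ - ⟪x, c₁⟫) + ⟪c₁, c₂⟫ * (⟪x, c₂⟫ - γ₂)) / D with ha
  set b := (‖c₁‖ ^ 2 * (γ₂ - ⟪x, c₂⟫) + ⟪c₁, c₂⟫ * (⟪x, c₁⟫ - γ₁)) / D with hb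
  set p := x + a • c₁ + b • c₂ with hp
  have hp1 : ⟪p, c₁⟫ = γ₁ := by
    rw [hp]
    simp only [inner_add_left, real_inner_smul_left, real_inner_self_eq_norm_sq,
      real_inner_comm c₁ c₂]
    rw [ha, hb]
    field_simp
    rw [hD]
    ring
  have hp2 : ⟪p, c₂⟫ = γ₂ := by
    rw [hp]
    simp only [inner_add_left, real_inner_smul_left, real_inner_self_eq_norm_sq,
      real_inner_comm c₁ c₂]
    rw [ha, hb]
    field_simp
    rw [hD]
    ring
  have hpC : p ∈ ({y : X | ⟪y, c₁⟫ = γ₁} ∩ {y : X | ⟪y, c₂⟫ = γ₂}) := ⟨hp1, hp2⟩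
  -- orthogonality: for q in the intersection, ⟪x - p, p - q⟫ = 0
  have key : ∀ q ∈ ({y : X | ⟪y, c₁⟫ = γ₁} ∩ {y : X | ⟪y, c₂⟫ = γ₂}),
      ⟪x - p, p - q⟫ = 0 := by
    rintro q ⟨hq1, hq2⟩
    have hxp : x - p = -(a • c₁ + b • c₂) := by rw [hp]; abel
    rw [hxp, inner_neg_left, inner_add_left, real_inner_smul_left, real_inner_smul_left,
      inner_sub_right, inner_sub_right, real_inner_comm p c₁, real_inner_comm p c₂,
      real_inner_comm q c₁, real_inner_comm q c₂, hp1, hp2, hq1, hq2]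
    ring
  have pyth : ∀ q ∈ ({y : X | ⟪y, c₁⟫ = γ₁} ∩ {y : X | ⟪y, c₂⟫ = γ₂}),
      ‖x - q‖ ^ 2 = ‖x - p‖ ^ 2 + ‖p - q‖ ^ 2 := by
    intro q hq
    have : x - q = (x - p) + (p - q) := by abel
    rw [this, norm_add_sq_real, key q hq]
    ring
  have hmin : ∀ q ∈ ({y : X | ⟪y, c₁⟫ = γ₁} ∩ {y : X | ⟪y, c₂⟫ = γ₂}),
      ‖x - p‖ ≤ ‖x - q‖ := by
    intro q hq
    have h2 := pyth q hq
    nlinarith [norm_nonneg (x - q), norm_nonneg (x - p), sq_nonneg ‖p - q‖]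
  have hex : ∃ p' ∈ ({y : X | ⟪y, c₁⟫ = γ₁} ∩ {y : X | ⟪y, c₂⟫ = γ₂}),
      ∀ q ∈ ({y : X | ⟪y, c₁⟫ = γ₁} ∩ {y : X | ⟪y, c₂⟫ = γ₂}), ‖x - p'‖ ≤ ‖x - q‖ :=
    ⟨p, hpC, hmin⟩
  refine ⟨⟨p, hpC⟩, ?_⟩
  have hproj : metricProj ({y : X | ⟪y, c₁⟫ = γ₁} ∩ {y : X | ⟪y, c₂⟫ = γ₂}) x = hex.choose := by
    rw [metricProj]
    exact dif_pos hex
  obtain ⟨hqC, hqmin⟩ := hex.choose_spec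
  have h3 : ‖x - hex.choose‖ ≤ ‖x - p‖ := hqmin p hpC
  have h4 := pyth hex.choose hqC
  have h5 : ‖p - hex.choose‖ ^ 2 ≤ 0 := by nlinarith [norm_nonneg (x - hex.choose), norm_nonneg (x - p)]
  have h6 : p = hex.choose := by
    have := le_antisymm h5 (sq_nonneg _)
    have : ‖p - hex.choose‖ = 0 := by nlinarith [norm_nonneg (p - hex.choose)]
    exact sub_eq_zero.mp (norm_eq_zero.mp this)
  rw [hproj, ← h6, hp]
end
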